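/- Let g ∈ ℝ, d > 0, let b : ℝ² → ℝ be smooth, and let u : ℝ × ℝ² → ℝ² and D : ℝ × ℝ² → ℝ be smooth with D(t,x) > 0 for all (t,x). Suppose the continuity equation ∂_t D + div(Du) = 0 holds everywhere, and that the momentum m := d( u − (d²/12) ∇(div u) ) (spatial derivatives) satisfies everywhere the CH2 equation ∂_t m + (u·∇)m + (div u) m + (Ju)ᵀ m = −g D ∇(D − b), where (Ju)ᵀm has i-th component ∑_j m_j ∂u_j/∂x_i. Let γ : ℝ × ℝ → ℝ² be smooth with γ(t, s+2π) = γ(t,s) and ∂_t γ(t,s) = u(t, γ(t,s)). Then the circulation C(t) = ∫₀^{2π} ⟨ (d/D)( u − (d²/12)∇(div u) )(t, γ(t,s)), ∂_s γ(t,s) ⟩ ds is constant in t. -/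

import Mathlib

open MeasureTheory

/-- `i`-th spatial partial derivative of a scalar function on `ℝⁿ`. -/
noncomputable def pd {n : ℕ} (f : EuclideanSpace ℝ (Fin n) → ℝ) (i : Fin n)
    (x : EuclideanSpace ℝ (Fin n)) : ℝ :=
  fderiv ℝ f x (EuclideanSpace.single i 1)

/-- Divergence of a vector field on `ℝⁿ`. -/
noncomputable def sdiv {n : ℕ} (u : EuclideanSpace ℝ (Fin n) → EuclideanSpace ℝ (Fin n))
    (x : EuclideanSpace ℝ (Fin n)) : ℝ :=
  ∑ i, pd (fun y => u y i) i x

/-- Gradient of a scalar function on `ℝⁿ`. -/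
noncomputable def sgrad {n : ℕ} (f : EuclideanSpace ℝ (Fin n) → ℝ)
    (x : EuclideanSpace ℝ (Fin n)) : EuclideanSpace ℝ (Fin n) :=
  WithLp.toLp 2 (fun i => pd f i x)

/-- Time derivative `∂ₜv` of a time-dependent vector field. -/
noncomputable def tdV {n : ℕ} (v : ℝ × EuclideanSpace ℝ (Fin n) → EuclideanSpace ℝ (Fin n))
    (t : ℝ) (x : EuclideanSpace ℝ (Fin n)) : EuclideanSpace ℝ (Fin n) :=
  WithLp.toLp 2 (fun i => deriv (fun τ => v (τ, x) i) t)

/-- Directional spatial derivative `(u·∇)v` of a time-dependent vector field. -/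
noncomputable def advV {n : ℕ} (u v : ℝ × EuclideanSpace ℝ (Fin n) → EuclideanSpace ℝ (Fin n))
    (t : ℝ) (x : EuclideanSpace ℝ (Fin n)) : EuclideanSpace ℝ (Fin n) :=
  WithLp.toLp 2 (fun i => fderiv ℝ (fun y => v (t, y) i) x (u (t, x)))

/-- `(Ju)ᵀ m`, with `i`-th component `∑ⱼ mⱼ ∂uⱼ/∂xᵢ`. -/
noncomputable def jacT {n : ℕ} (u m : ℝ × EuclideanSpace ℝ (Fin n) → EuclideanSpace ℝ (Fin n))
    (t : ℝ) (x : EuclideanSpace ℝ (Fin n)) : EuclideanSpace ℝ (Fin n) :=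
  WithLp.toLp 2 (fun i => ∑ j, m (t, x) j * pd (fun y => u (t, y) j) i x)

/-- The CH2 momentum `m = d(u - (d²/12)∇(div u))` (spatial derivatives). -/
noncomputable def mCH2 {n : ℕ} (d : ℝ)
    (u : ℝ × EuclideanSpace ℝ (Fin n) → EuclideanSpace ℝ (Fin n))
    (p : ℝ × EuclideanSpace ℝ (Fin n)) : EuclideanSpace ℝ (Fin n) :=
  d • (u p - (d ^ 2 / 12) • sgrad (fun y => sdiv (fun z => u (p.1, z)) y) p.2)

/-- Derivative `∂ₜγ` of a time-dependent loop with respect to time. -/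
noncomputable def tdLoop {n : ℕ} (γ : ℝ × ℝ → EuclideanSpace ℝ (Fin n)) (t s : ℝ) :
    EuclideanSpace ℝ (Fin n) :=
  WithLp.toLp 2 (fun i => deriv (fun τ => γ (τ, s) i) t)

/-- Derivative `∂ₛγ` of a time-dependent loop with respect to its parameter. -/
noncomputable def sdLoop {n : ℕ} (γ : ℝ × ℝ → EuclideanSpace ℝ (Fin n)) (t s : ℝ) :
    EuclideanSpace ℝ (Fin n) :=
  WithLp.toLp 2 (fun i => deriv (fun σ => γ (t, σ) i) s)

section helpers

variable {G F : Type*} [NormedAddCommGroup G] [NormedSpace ℝ G]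
  [NormedAddCommGroup F] [NormedSpace ℝ F]

lemma hasDerivAt_slice_t {f : ℝ × G → F} {t : ℝ} {x : G}
    (hf : DifferentiableAt ℝ f (t, x)) :
    HasDerivAt (fun τ => f (τ, x)) (fderiv ℝ f (t, x) (1, 0)) t :=
  hf.hasFDerivAt.comp_hasDerivAt t ((hasDerivAt_id t).prodMk (hasDerivAt_const t x))

lemma hasDerivAt_slice_s {f : ℝ × ℝ → F} {t s : ℝ}
    (hf : DifferentiableAt ℝ f (t, s)) :
    HasDerivAt (fun σ => f (t, σ)) (fderiv ℝ f (t, s) (0, 1)) s :=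
  hf.hasFDerivAt.comp_hasDerivAt s ((hasDerivAt_const s t).prodMk (hasDerivAt_id s))

lemma hasFDerivAt_slice_x {f : ℝ × G → F} {t : ℝ} {x : G}
    (hf : DifferentiableAt ℝ f (t, x)) :
    HasFDerivAt (fun y => f (t, y))
      ((fderiv ℝ f (t, x)).comp ((0 : G →L[ℝ] ℝ).prod (ContinuousLinearMap.id ℝ G))) x :=
  hf.hasFDerivAt.comp x ((hasFDerivAt_const t x).prodMk (hasFDerivAt_id x))

lemma fderiv_slice_x {f : ℝ × G → F} {t : ℝ} {x : G}
    (hf : DifferentiableAt ℝ f (t, x)) (v : G) :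
    fderiv ℝ (fun y => f (t, y)) x v = fderiv ℝ f (t, x) (0, v) := by
  rw [(hasFDerivAt_slice_x hf).fderiv]; rfl

variable {n : ℕ}

lemma euclid_decomp (w : EuclideanSpace ℝ (Fin n)) :
    w = ∑ j, w j • EuclideanSpace.single j (1:ℝ) := by
  have h := (EuclideanSpace.basisFun (Fin n) ℝ).sum_repr w
  simp [EuclideanSpace.basisFun_apply, EuclideanSpace.basisFun_repr] at h
  exact h.symm

lemma clm_pair_decomp (φ : ℝ × EuclideanSpace ℝ (Fin n) →L[ℝ] ℝ) (a : ℝ)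
    (w : EuclideanSpace ℝ (Fin n)) :
    φ (a, w) = a * φ (1, 0) + ∑ j, w j * φ (0, EuclideanSpace.single j 1) := by
  have hw : (a, w) = a • ((1:ℝ), (0 : EuclideanSpace ℝ (Fin n)))
      + ∑ j, w j • ((0:ℝ), EuclideanSpace.single j (1:ℝ)) := by
    rw [Prod.ext_iff]
    refine ⟨?_, ?_⟩
    · rw [Prod.fst_add, Prod.fst_sum]
      simp
    · rw [Prod.snd_add, Prod.snd_sum]
      simp only [Prod.smul_mk, Prod.snd, smul_zero, zero_add]
      simpa using euclid_decomp w
  rw [hw, map_add, _root_.map_smul, map_sum]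
  simp only [smul_eq_mul]
  congr 1
  refine Finset.sum_congr rfl fun x _ => ?_
  rw [_root_.map_smul, smul_eq_mul]

lemma contDiff_sdiv_uncurry {u : ℝ × EuclideanSpace ℝ (Fin n) → EuclideanSpace ℝ (Fin n)}
    (hu : ContDiff ℝ (⊤ : ℕ∞) u) :
    ContDiff ℝ (⊤ : ℕ∞) (fun q : ℝ × EuclideanSpace ℝ (Fin n) => sdiv (fun z => u (q.1, z)) q.2) := by
  unfold sdiv pd
  refine ContDiff.sum fun j _ => ?_
  refine ContDiff.clm_apply ?_ contDiff_const
  refine ContDiff.fderiv (m := ((⊤ : ℕ∞) : WithTop ℕ∞)) (f := fun (q : ℝ × EuclideanSpace ℝ (Fin n)) z => u (q.1, z) j)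
    (g := Prod.snd) ?_ contDiff_snd (by simp)
  exact (contDiff_euclidean.mp hu j).comp ((contDiff_fst.comp (contDiff_fst : ContDiff ℝ (⊤ : ℕ∞) (Prod.fst : (ℝ × EuclideanSpace ℝ (Fin n)) × EuclideanSpace ℝ (Fin n) → ℝ × EuclideanSpace ℝ (Fin n)))).prodMk contDiff_snd)

lemma contDiff_mCH2 {d : ℝ} {u : ℝ × EuclideanSpace ℝ (Fin n) → EuclideanSpace ℝ (Fin n)}
    (hu : ContDiff ℝ (⊤ : ℕ∞) u) (i : Fin n) :
    ContDiff ℝ (⊤ : ℕ∞) (fun p => mCH2 d u p i) := by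
  have h1 : ContDiff ℝ (⊤ : ℕ∞) (fun p : ℝ × EuclideanSpace ℝ (Fin n) =>
      fderiv ℝ (fun y => sdiv (fun z => u (p.1, z)) y) p.2 (EuclideanSpace.single i 1)) := by
    refine ContDiff.clm_apply ?_ contDiff_const
    refine ContDiff.fderiv (m := ((⊤ : ℕ∞) : WithTop ℕ∞))
      (f := fun (p : ℝ × EuclideanSpace ℝ (Fin n)) y => sdiv (fun z => u (p.1, z)) y)
      (g := Prod.snd) ?_ contDiff_snd (by simp)
    exact (contDiff_sdiv_uncurry hu).comp ((contDiff_fst.comp (contDiff_fst : ContDiff ℝ (⊤ : ℕ∞) (Prod.fst : (ℝ × EuclideanSpace ℝ (Fin n)) × EuclideanSpace ℝ (Fin n) → ℝ × EuclideanSpace ℝ (Fin n)))).prodMk contDiff_snd)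
  have h2 : (fun p => mCH2 d u p i) = fun p : ℝ × EuclideanSpace ℝ (Fin n) =>
      d * (u p i - (d ^ 2 / 12) * fderiv ℝ (fun y => sdiv (fun z => u (p.1, z)) y) p.2
        (EuclideanSpace.single i 1)) := rfl
  rw [h2]
  exact contDiff_const.mul ((contDiff_euclidean.mp hu i).sub (contDiff_const.mul h1))

end helpers

section pde
variable {g d : ℝ} {b : EuclideanSpace ℝ (Fin 2) → ℝ}
  {u : ℝ × EuclideanSpace ℝ (Fin 2) → EuclideanSpace ℝ (Fin 2)}
  {D : ℝ × EuclideanSpace ℝ (Fin 2) → ℝ}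

lemma vPDE (hb : ContDiff ℝ (⊤ : ℕ∞) b) (hu : ContDiff ℝ (⊤ : ℕ∞) u) (hD : ContDiff ℝ (⊤ : ℕ∞) D)
    (hDpos : ∀ p, 0 < D p)
    (hcont : ∀ (t : ℝ) (x : EuclideanSpace ℝ (Fin 2)),
      deriv (fun τ => D (τ, x)) t + sdiv (fun y => D (t, y) • u (t, y)) x = 0)
    (heq : ∀ (t : ℝ) (x : EuclideanSpace ℝ (Fin 2)),
      tdV (mCH2 d u) t x + advV u (mCH2 d u) t x
        + sdiv (fun y => u (t, y)) x • mCH2 d u (t, x)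
        + jacT u (mCH2 d u) t x
      = -(g • (D (t, x) • sgrad (fun y => D (t, y) - b y) x)))
    (t : ℝ) (x : EuclideanSpace ℝ (Fin 2)) (i : Fin 2) :
    fderiv ℝ (fun q => (D q)⁻¹ * mCH2 d u q i) (t, x) (1, u (t, x))
      + ∑ j, ((D (t, x))⁻¹ * mCH2 d u (t, x) j)
          * fderiv ℝ (fun q => u q j) (t, x) (0, EuclideanSpace.single i 1)
    = -g * fderiv ℝ (fun q : ℝ × EuclideanSpace ℝ (Fin 2) => D q - b q.2) (t, x)
        (0, EuclideanSpace.single i 1) := by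
  have hmd : ∀ j, DifferentiableAt ℝ (fun q => mCH2 d u q j) (t, x) := fun j =>
    ((contDiff_mCH2 hu j).differentiable (by simp)) (t, x)
  have hud : ∀ j, DifferentiableAt ℝ (fun q => u q j) (t, x) := fun j =>
    ((contDiff_euclidean.mp hu j).differentiable (by simp)) (t, x)
  have hDd : DifferentiableAt ℝ D (t, x) := (hD.differentiable (by simp)) (t, x)
  have ha : D (t, x) ≠ 0 := (hDpos (t, x)).ne'
  -- quotient rule
  have hfv : ∀ w : ℝ × EuclideanSpace ℝ (Fin 2),
      fderiv ℝ (fun q => (D q)⁻¹ * mCH2 d u q i) (t, x) w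
      = (D (t, x))⁻¹ * fderiv ℝ (fun q => mCH2 d u q i) (t, x) w
        - mCH2 d u (t, x) i * ((D (t, x)) ^ 2)⁻¹ * fderiv ℝ D (t, x) w := by
    intro w
    have hinv : HasFDerivAt (fun q => (D q)⁻¹)
        ((-((D (t, x)) ^ 2)⁻¹) • fderiv ℝ D (t, x)) (t, x) :=
      (hasDerivAt_inv ha).comp_hasFDerivAt (t, x) hDd.hasFDerivAt
    have h := (hinv.mul (hmd i).hasFDerivAt).fderiv
    rw [show (fun q => (D q)⁻¹ * mCH2 d u q i) = ((fun q => (D q)⁻¹) * fun q => mCH2 d u q i)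
      from rfl, h]
    simp only [ContinuousLinearMap.add_apply, ContinuousLinearMap.smul_apply, smul_eq_mul,
      neg_mul, ContinuousLinearMap.neg_apply]
    ring
  -- the momentum equation, componentwise
  have heqi : fderiv ℝ (fun q => mCH2 d u q i) (t, x) (1, 0)
      + ∑ j, u (t, x) j * fderiv ℝ (fun q => mCH2 d u q i) (t, x)
          (0, EuclideanSpace.single j 1)
      + (∑ j, fderiv ℝ (fun q => u q j) (t, x) (0, EuclideanSpace.single j 1))
          * mCH2 d u (t, x) i
      + ∑ j, mCH2 d u (t, x) j * fderiv ℝ (fun q => u q j) (t, x)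
          (0, EuclideanSpace.single i 1)
      = -(g * (D (t, x) * fderiv ℝ (fun q : ℝ × EuclideanSpace ℝ (Fin 2) => D q - b q.2)
          (t, x) (0, EuclideanSpace.single i 1))) := by
    have h0 := congrArg (fun v => v i) (heq t x)
    have e1 : tdV (mCH2 d u) t x i = fderiv ℝ (fun q => mCH2 d u q i) (t, x) (1, 0) :=
      (hasDerivAt_slice_t (hmd i)).deriv
    have e2 : advV u (mCH2 d u) t x i
        = ∑ j, u (t, x) j * fderiv ℝ (fun q => mCH2 d u q i) (t, x)
            (0, EuclideanSpace.single j 1) := by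
      show fderiv ℝ (fun y => mCH2 d u (t, y) i) x (u (t, x)) = _
      rw [fderiv_slice_x (hmd i)]
      have := clm_pair_decomp (fderiv ℝ (fun q => mCH2 d u q i) (t, x)) 0 (u (t, x))
      simpa using this
    have e3 : sdiv (fun y => u (t, y)) x
        = ∑ j, fderiv ℝ (fun q => u q j) (t, x) (0, EuclideanSpace.single j 1) := by
      unfold sdiv pd
      exact Finset.sum_congr rfl fun j _ => fderiv_slice_x (hud j) _
    have e4 : jacT u (mCH2 d u) t x i
        = ∑ j, mCH2 d u (t, x) j * fderiv ℝ (fun q => u q j) (t, x)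
            (0, EuclideanSpace.single i 1) := by
      show (∑ j, mCH2 d u (t, x) j * pd (fun y => u (t, y) j) i x) = _
      unfold pd
      exact Finset.sum_congr rfl fun j _ => by rw [fderiv_slice_x (hud j)]
    have e5 : sgrad (fun y => D (t, y) - b y) x i
        = fderiv ℝ (fun q : ℝ × EuclideanSpace ℝ (Fin 2) => D q - b q.2) (t, x)
            (0, EuclideanSpace.single i 1) := by
      show pd (fun y => D (t, y) - b y) i x = _
      unfold pd
      have hbd : DifferentiableAt ℝ (fun q : ℝ × EuclideanSpace ℝ (Fin 2) => b q.2) (t, x) :=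
        ((hb.differentiable (by simp)) x).comp (t, x) differentiableAt_snd
      exact fderiv_slice_x (hDd.sub hbd) _
    simp only [PiLp.add_apply, PiLp.smul_apply, PiLp.neg_apply, smul_eq_mul] at h0
    rw [e1, e2, e3, e4, e5] at h0
    exact h0
  -- the continuity equation, expanded
  have hcont' : fderiv ℝ D (t, x) (1, 0)
      + ∑ j, (fderiv ℝ D (t, x) (0, EuclideanSpace.single j 1) * u (t, x) j
          + D (t, x) * fderiv ℝ (fun q => u q j) (t, x) (0, EuclideanSpace.single j 1)) = 0 := by
    have h1 := hcont t x
    rw [show deriv (fun τ => D (τ, x)) t = fderiv ℝ D (t, x) (1, 0) from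
      (hasDerivAt_slice_t hDd).deriv] at h1
    have h2 : sdiv (fun y => D (t, y) • u (t, y)) x
        = ∑ j, (fderiv ℝ D (t, x) (0, EuclideanSpace.single j 1) * u (t, x) j
          + D (t, x) * fderiv ℝ (fun q => u q j) (t, x) (0, EuclideanSpace.single j 1)) := by
      unfold sdiv pd
      refine Finset.sum_congr rfl fun j _ => ?_
      have hre : (fun y => (D (t, y) • u (t, y)) j) = fun y => D (t, y) * u (t, y) j := rfl
      have hprod := ((hasFDerivAt_slice_x hDd).mul (hasFDerivAt_slice_x (hud j))).fderiv
      rw [hre, show (fun y => D (t, y) * u (t, y) j) = ((fun y => D (t, y)) * fun y => u (t, y) j)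
        from rfl, hprod]
      simp only [ContinuousLinearMap.add_apply, ContinuousLinearMap.smul_apply,
        ContinuousLinearMap.comp_apply, ContinuousLinearMap.prod_apply,
        ContinuousLinearMap.zero_apply, ContinuousLinearMap.coe_id', id_eq, smul_eq_mul]
      ring
    rw [h2] at h1
    exact h1
  -- expand the directional derivatives and conclude by algebra
  have d1 := clm_pair_decomp (fderiv ℝ (fun q => mCH2 d u q i) (t, x)) 1 (u (t, x))
  have d2 := clm_pair_decomp (fderiv ℝ D (t, x)) 1 (u (t, x))
  rw [hfv, d1, d2, show ((D (t, x)) ^ 2)⁻¹ = (D (t, x))⁻¹ * (D (t, x))⁻¹ by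
    rw [sq, mul_inv]]
  have hkD : (D (t, x))⁻¹ * D (t, x) = 1 := inv_mul_cancel₀ ha
  simp only [Fin.sum_univ_two, one_mul] at heqi hcont' ⊢
  linear_combination (D (t, x))⁻¹ * heqi
    - mCH2 d u (t, x) i * (D (t, x))⁻¹ * (D (t, x))⁻¹ * hcont'
    + ((D (t, x))⁻¹ * ((fderiv ℝ (fun q => u q 0) (t, x)) (0, EuclideanSpace.single 0 1)
        + (fderiv ℝ (fun q => u q 1) (t, x)) (0, EuclideanSpace.single 1 1))
          * mCH2 d u (t, x) i
      - g * (fderiv ℝ (fun q : ℝ × EuclideanSpace ℝ (Fin 2) => D q - b q.2) (t, x)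
          (0, EuclideanSpace.single i 1))) * hkD
end pde

section loop
variable {γ : ℝ × ℝ → EuclideanSpace ℝ (Fin 2)}

lemma sdLoop_eq (hγ : ContDiff ℝ (⊤ : ℕ∞) γ) (t s : ℝ) (i : Fin 2) :
    sdLoop γ t s i = fderiv ℝ (fun q => γ q i) (t, s) (0, 1) :=
  (hasDerivAt_slice_s (((contDiff_euclidean.mp hγ i).differentiable (by simp)) (t, s))).deriv

lemma tdLoop_eq (hγ : ContDiff ℝ (⊤ : ℕ∞) γ) (t s : ℝ) (i : Fin 2) :
    tdLoop γ t s i = fderiv ℝ (fun q => γ q i) (t, s) (1, 0) :=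
  (hasDerivAt_slice_t (((contDiff_euclidean.mp hγ i).differentiable (by simp)) (t, s))).deriv

lemma fderiv_loop_comp (hγ : ContDiff ℝ (⊤ : ℕ∞) γ) (q : ℝ × ℝ) (i : Fin 2) :
    fderiv ℝ (fun r => γ r i) q
      = (EuclideanSpace.proj i).comp (fderiv ℝ γ q) := by
  have h : (fun r => γ r i) = (⇑(EuclideanSpace.proj (𝕜 := ℝ) i) ∘ γ) := rfl
  rw [h]
  exact ((EuclideanSpace.proj i).hasFDerivAt.comp q
    ((hγ.differentiable (by simp) q).hasFDerivAt)).fderiv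

lemma hasDerivAt_loop_t (hγ : ContDiff ℝ (⊤ : ℕ∞) γ) (t s : ℝ) :
    HasDerivAt (fun τ => γ (τ, s)) (tdLoop γ t s) t := by
  have h := hasDerivAt_slice_t ((hγ.differentiable (by simp)) (t, s))
  have he : fderiv ℝ γ (t, s) (1, 0) = tdLoop γ t s := by
    ext i
    rw [tdLoop_eq hγ t s i, fderiv_loop_comp hγ (t, s) i]
    rfl
  rwa [he] at h

lemma hasDerivAt_loop_s (hγ : ContDiff ℝ (⊤ : ℕ∞) γ) (t s : ℝ) :
    HasDerivAt (fun σ => γ (t, σ)) (sdLoop γ t s) s := by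
  have h := hasDerivAt_slice_s ((hγ.differentiable (by simp)) (t, s))
  have he : fderiv ℝ γ (t, s) (0, 1) = sdLoop γ t s := by
    ext i
    rw [sdLoop_eq hγ t s i, fderiv_loop_comp hγ (t, s) i]
    rfl
  rwa [he] at h

/-- mixed partials: `∂ₜ∂ₛγᵢ = ∂ₛ(uᵢ∘γ)` -/
lemma hasDerivAt_sdLoop_t {u : ℝ × EuclideanSpace ℝ (Fin 2) → EuclideanSpace ℝ (Fin 2)}
    (hγ : ContDiff ℝ (⊤ : ℕ∞) γ) (hflow : ∀ t s, tdLoop γ t s = u (t, γ (t, s)))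
    (t s : ℝ) (i : Fin 2) :
    HasDerivAt (fun τ => sdLoop γ τ s i) (deriv (fun σ => u (t, γ (t, σ)) i) s) t := by
  have hγi : ContDiff ℝ (⊤ : ℕ∞) (fun q => γ q i) := contDiff_euclidean.mp hγ i
  have hd1 : Differentiable ℝ (fun q => γ q i) := hγi.differentiable (by simp)
  have hfd : ContDiff ℝ (⊤ : ℕ∞) (fderiv ℝ (fun q => γ q i)) := hγi.fderiv_right (by simp)
  set A := fderiv ℝ (fderiv ℝ (fun q => γ q i)) (t, s) with hA
  have hsymm : A (1, 0) (0, 1) = A (0, 1) (1, 0) :=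
    second_derivative_symmetric (fun y => (hd1 y).hasFDerivAt)
      ((hfd.differentiable (by simp) (t, s)).hasFDerivAt) _ _
  have h1 : HasDerivAt (fun τ => fderiv ℝ (fun q => γ q i) (τ, s)) (A (1, 0)) t :=
    hasDerivAt_slice_t ((hfd.differentiable (by simp)) (t, s))
  have h2 : HasDerivAt (fun τ => fderiv ℝ (fun q => γ q i) (τ, s) (0, 1))
      (A (1, 0) (0, 1)) t := by
    have := ((ContinuousLinearMap.apply ℝ ℝ ((0:ℝ), (1:ℝ))).hasFDerivAt).comp_hasDerivAt t h1
    exact this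
  have h3 : (fun τ => sdLoop γ τ s i)
      = fun τ => fderiv ℝ (fun q => γ q i) (τ, s) (0, 1) :=
    funext fun τ => sdLoop_eq hγ τ s i
  have h4 : (fun σ => u (t, γ (t, σ)) i)
      = fun σ => fderiv ℝ (fun q => γ q i) (t, σ) (1, 0) := by
    funext σ
    rw [show u (t, γ (t, σ)) i = tdLoop γ t σ i from (congrArg (fun v => v i) (hflow t σ)).symm]
    exact tdLoop_eq hγ t σ i
  have h5 : HasDerivAt (fun σ => fderiv ℝ (fun q => γ q i) (t, σ) (1, 0))
      (A (0, 1) (1, 0)) s := by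
    have h1' : HasDerivAt (fun σ => fderiv ℝ (fun q => γ q i) (t, σ)) (A (0, 1)) s :=
      hasDerivAt_slice_s ((hfd.differentiable (by simp)) (t, s))
    have := ((ContinuousLinearMap.apply ℝ ℝ ((1:ℝ), (0:ℝ))).hasFDerivAt).comp_hasDerivAt s h1'
    exact this
  have hval : deriv (fun σ => u (t, γ (t, σ)) i) s = A (1, 0) (0, 1) := by
    rw [h4, h5.deriv, hsymm]
  rw [h3, hval]
  exact h2

end loop

section phider
variable {g d : ℝ} {b : EuclideanSpace ℝ (Fin 2) → ℝ}
  {u : ℝ × EuclideanSpace ℝ (Fin 2) → EuclideanSpace ℝ (Fin 2)}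
  {D : ℝ × EuclideanSpace ℝ (Fin 2) → ℝ} {γ : ℝ × ℝ → EuclideanSpace ℝ (Fin 2)}

lemma Phi_hasDerivAt (hb : ContDiff ℝ (⊤ : ℕ∞) b) (hu : ContDiff ℝ (⊤ : ℕ∞) u) (hD : ContDiff ℝ (⊤ : ℕ∞) D)
    (hDpos : ∀ p, 0 < D p)
    (hcont : ∀ (t : ℝ) (x : EuclideanSpace ℝ (Fin 2)),
      deriv (fun τ => D (τ, x)) t + sdiv (fun y => D (t, y) • u (t, y)) x = 0)
    (heq : ∀ (t : ℝ) (x : EuclideanSpace ℝ (Fin 2)),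
      tdV (mCH2 d u) t x + advV u (mCH2 d u) t x
        + sdiv (fun y => u (t, y)) x • mCH2 d u (t, x)
        + jacT u (mCH2 d u) t x
      = -(g • (D (t, x) • sgrad (fun y => D (t, y) - b y) x)))
    (hγ : ContDiff ℝ (⊤ : ℕ∞) γ) (hflow : ∀ t s, tdLoop γ t s = u (t, γ (t, s)))
    (t s : ℝ) :
    HasDerivAt
      (fun τ => ∑ i, (D (τ, γ (τ, s)))⁻¹ * mCH2 d u (τ, γ (τ, s)) i * sdLoop γ τ s i)
      (-g * ∑ j, sdLoop γ t s j *
        fderiv ℝ (fun q : ℝ × EuclideanSpace ℝ (Fin 2) => D q - b q.2) (t, γ (t, s))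
          (0, EuclideanSpace.single j 1)) t := by
  have hvC : ∀ i, ContDiff ℝ (⊤ : ℕ∞) (fun q => (D q)⁻¹ * mCH2 d u q i) := fun i =>
    (hD.inv fun p => (hDpos p).ne').mul (contDiff_mCH2 hu i)
  have hcurve : HasDerivAt (fun τ => ((τ, γ (τ, s)) : ℝ × EuclideanSpace ℝ (Fin 2)))
      (1, u (t, γ (t, s))) t := by
    have h := (hasDerivAt_id t).prodMk (hasDerivAt_loop_t hγ t s)
    rwa [hflow t s] at h
  have hA : ∀ i, HasDerivAt (fun τ => (D (τ, γ (τ, s)))⁻¹ * mCH2 d u (τ, γ (τ, s)) i)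
      (fderiv ℝ (fun q => (D q)⁻¹ * mCH2 d u q i) (t, γ (t, s)) (1, u (t, γ (t, s)))) t :=
    fun i => (((hvC i).differentiable (by simp)) _).hasFDerivAt.comp_hasDerivAt t hcurve
  have hB : ∀ i, HasDerivAt (fun τ => sdLoop γ τ s i)
      (deriv (fun σ => u (t, γ (t, σ)) i) s) t := hasDerivAt_sdLoop_t hγ hflow t s
  have hBval : ∀ i, deriv (fun σ => u (t, γ (t, σ)) i) s
      = ∑ j, sdLoop γ t s j * fderiv ℝ (fun q => u q i) (t, γ (t, s))
          (0, EuclideanSpace.single j 1) := by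
    intro i
    have hud : DifferentiableAt ℝ (fun q => u q i) (t, γ (t, s)) :=
      ((contDiff_euclidean.mp hu i).differentiable (by simp)) _
    have hcomp := (hasFDerivAt_slice_x hud).comp_hasDerivAt s (hasDerivAt_loop_s hγ t s)
    rw [show (fun σ => u (t, γ (t, σ)) i) = ((fun y => u (t, y) i) ∘ fun σ => γ (t, σ))
      from rfl, hcomp.deriv]
    simp only [ContinuousLinearMap.comp_apply, ContinuousLinearMap.prod_apply,
      ContinuousLinearMap.zero_apply, ContinuousLinearMap.coe_id', id_eq]
    rw [clm_pair_decomp]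
    simp
  have hsum := HasDerivAt.sum (u := (Finset.univ : Finset (Fin 2)))
    (fun i _ => (hA i).mul (hB i))
  refine HasDerivAt.congr_deriv hsum ?_
  symm
  have hP0 := vPDE hb hu hD hDpos hcont heq t (γ (t, s)) 0
  have hP1 := vPDE hb hu hD hDpos hcont heq t (γ (t, s)) 1
  simp only [hBval] at *
  simp only [Fin.sum_univ_two] at hP0 hP1 ⊢
  linear_combination (-(sdLoop γ t s 0)) * hP0 - sdLoop γ t s 1 * hP1
end phider

section final
variable {g d : ℝ} {b : EuclideanSpace ℝ (Fin 2) → ℝ}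
  {u : ℝ × EuclideanSpace ℝ (Fin 2) → EuclideanSpace ℝ (Fin 2)}
  {D : ℝ × EuclideanSpace ℝ (Fin 2) → ℝ} {γ : ℝ × ℝ → EuclideanSpace ℝ (Fin 2)}

lemma Psi_hasDerivAt (hb : ContDiff ℝ (⊤ : ℕ∞) b) (hD : ContDiff ℝ (⊤ : ℕ∞) D) (hγ : ContDiff ℝ (⊤ : ℕ∞) γ)
    (t s : ℝ) :
    HasDerivAt (fun σ => -g * (D (t, γ (t, σ)) - b (γ (t, σ))))
      (-g * ∑ j, sdLoop γ t s j *
        fderiv ℝ (fun q : ℝ × EuclideanSpace ℝ (Fin 2) => D q - b q.2) (t, γ (t, s))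
          (0, EuclideanSpace.single j 1)) s := by
  have hDB : ContDiff ℝ (⊤ : ℕ∞) (fun q : ℝ × EuclideanSpace ℝ (Fin 2) => D q - b q.2) :=
    hD.sub (hb.comp contDiff_snd)
  have hcurve : HasDerivAt (fun σ => ((t, γ (t, σ)) : ℝ × EuclideanSpace ℝ (Fin 2)))
      ((0 : ℝ), sdLoop γ t s) s := (hasDerivAt_const s t).prodMk (hasDerivAt_loop_s hγ t s)
  have h := (((hDB.differentiable (by simp)) _).hasFDerivAt.comp_hasDerivAt s hcurve).const_mul (-g)
  refine HasDerivAt.congr_deriv h ?_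
  rw [clm_pair_decomp]
  simp

lemma W_cont (hb : ContDiff ℝ (⊤ : ℕ∞) b) (hD : ContDiff ℝ (⊤ : ℕ∞) D) (hγ : ContDiff ℝ (⊤ : ℕ∞) γ) :
    Continuous (fun q : ℝ × ℝ => -g * ∑ j, sdLoop γ q.1 q.2 j *
      fderiv ℝ (fun r : ℝ × EuclideanSpace ℝ (Fin 2) => D r - b r.2) (q.1, γ q)
        (0, EuclideanSpace.single j 1)) := by
  have hDB : ContDiff ℝ (⊤ : ℕ∞) (fun q : ℝ × EuclideanSpace ℝ (Fin 2) => D q - b q.2) :=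
    hD.sub (hb.comp contDiff_snd)
  refine continuous_const.mul (continuous_finset_sum _ fun j _ => Continuous.mul ?_ ?_)
  · have hrw : (fun q : ℝ × ℝ => sdLoop γ q.1 q.2 j)
        = fun q => (ContinuousLinearMap.apply ℝ ℝ ((0:ℝ), (1:ℝ)))
            (fderiv ℝ (fun r => γ r j) q) := by
      funext q
      rw [show q = (q.1, q.2) from rfl]
      exact sdLoop_eq hγ q.1 q.2 j
    rw [hrw]
    exact (ContinuousLinearMap.apply ℝ ℝ ((0:ℝ), (1:ℝ))).continuous.comp
      ((contDiff_euclidean.mp hγ j).fderiv_right (m := (⊤ : ℕ∞)) (by simp)).continuous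
  · exact (ContinuousLinearMap.apply ℝ ℝ ((0:ℝ), EuclideanSpace.single j 1)).continuous.comp
      ((hDB.fderiv_right (m := (⊤ : ℕ∞)) (by simp)).continuous.comp (continuous_fst.prodMk hγ.continuous))

lemma Phi_cont_s (hu : ContDiff ℝ (⊤ : ℕ∞) u) (hD : ContDiff ℝ (⊤ : ℕ∞) D)
    (hDpos : ∀ p, 0 < D p) (hγ : ContDiff ℝ (⊤ : ℕ∞) γ) (t : ℝ) :
    Continuous (fun s => ∑ i, (D (t, γ (t, s)))⁻¹ * mCH2 d u (t, γ (t, s)) i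
      * sdLoop γ t s i) := by
  refine continuous_finset_sum _ fun i _ => Continuous.mul ?_ ?_
  · have hvC : ContDiff ℝ (⊤ : ℕ∞) (fun q => (D q)⁻¹ * mCH2 d u q i) :=
      (hD.inv fun p => (hDpos p).ne').mul (contDiff_mCH2 hu i)
    exact hvC.continuous.comp (continuous_const.prodMk
      (hγ.continuous.comp (continuous_const.prodMk continuous_id)))
  · have hrw : (fun s : ℝ => sdLoop γ t s i)
        = fun s => (ContinuousLinearMap.apply ℝ ℝ ((0:ℝ), (1:ℝ)))
            (fderiv ℝ (fun r => γ r i) (t, s)) := by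
      funext s
      exact sdLoop_eq hγ t s i
    rw [hrw]
    exact ((ContinuousLinearMap.apply ℝ ℝ ((0:ℝ), (1:ℝ))).continuous.comp
      ((contDiff_euclidean.mp hγ i).fderiv_right (m := (⊤ : ℕ∞)) (by simp)).continuous).comp
      (continuous_const.prodMk continuous_id)

end final

/-- Kelvin circulation theorem for the 2D CH2 equation: the circulation of `m/D`
around a material loop advected by `u` is constant in time. -/
theorem stmt8 (g : ℝ) (d : ℝ) (hd : 0 < d)
    (b : EuclideanSpace ℝ (Fin 2) → ℝ) (hb : ContDiff ℝ (⊤ : ℕ∞) b)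
    (u : ℝ × EuclideanSpace ℝ (Fin 2) → EuclideanSpace ℝ (Fin 2))
    (D : ℝ × EuclideanSpace ℝ (Fin 2) → ℝ)
    (hu : ContDiff ℝ (⊤ : ℕ∞) u) (hD : ContDiff ℝ (⊤ : ℕ∞) D) (hDpos : ∀ p, 0 < D p)
    (hcont : ∀ (t : ℝ) (x : EuclideanSpace ℝ (Fin 2)),
      deriv (fun τ => D (τ, x)) t + sdiv (fun y => D (t, y) • u (t, y)) x = 0)
    (heq : ∀ (t : ℝ) (x : EuclideanSpace ℝ (Fin 2)),
      tdV (mCH2 d u) t x + advV u (mCH2 d u) t x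
        + sdiv (fun y => u (t, y)) x • mCH2 d u (t, x)
        + jacT u (mCH2 d u) t x
      = -(g • (D (t, x) • sgrad (fun y => D (t, y) - b y) x)))
    (γ : ℝ × ℝ → EuclideanSpace ℝ (Fin 2)) (hγ : ContDiff ℝ (⊤ : ℕ∞) γ)
    (hper : ∀ t s, γ (t, s + 2 * Real.pi) = γ (t, s))
    (hflow : ∀ t s, tdLoop γ t s = u (t, γ (t, s))) :
    ∀ t₁ t₂ : ℝ,
      (∫ s in (0 : ℝ)..(2 * Real.pi),
        (inner ℝ ((D (t₁, γ (t₁, s)))⁻¹ • mCH2 d u (t₁, γ (t₁, s))) (sdLoop γ t₁ s) : ℝ)) =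
      ∫ s in (0 : ℝ)..(2 * Real.pi),
        (inner ℝ ((D (t₂, γ (t₂, s)))⁻¹ • mCH2 d u (t₂, γ (t₂, s))) (sdLoop γ t₂ s) : ℝ) := by
  have hWc := W_cont (g := g) hb hD hγ
  set Φ : ℝ → ℝ → ℝ := fun t s =>
    ∑ i, (D (t, γ (t, s)))⁻¹ * mCH2 d u (t, γ (t, s)) i * sdLoop γ t s i with hPhidef
  set W : ℝ → ℝ → ℝ := fun t s => -g * ∑ j, sdLoop γ t s j *
    fderiv ℝ (fun r : ℝ × EuclideanSpace ℝ (Fin 2) => D r - b r.2) (t, γ (t, s))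
      (0, EuclideanSpace.single j 1) with hWdef
  have hWc' : Continuous fun q : ℝ × ℝ => W q.1 q.2 := hWc
  have hWcs : ∀ t : ℝ, Continuous (W t) := fun t =>
    hWc'.comp (continuous_const.prodMk continuous_id)
  have hC0 : ∀ t₀ : ℝ,
      HasDerivAt (fun t => ∫ s in (0:ℝ)..(2*Real.pi), Φ t s) 0 t₀ := by
    intro t₀
    obtain ⟨M, hM⟩ := ((isCompact_Icc.prod isCompact_Icc) :
        IsCompact ((Set.Icc (t₀-1) (t₀+1)) ×ˢ (Set.Icc (0:ℝ) (2*Real.pi)))).exists_bound_of_continuousOn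
      hWc'.continuousOn
    have hbound : ∀ᵐ s ∂MeasureTheory.volume, s ∈ Set.uIoc (0:ℝ) (2*Real.pi) →
        ∀ x ∈ Metric.ball t₀ 1, ‖W x s‖ ≤ M := by
      refine Filter.Eventually.of_forall fun s hs x hx => hM (x, s) ⟨?_, ?_⟩
      · rw [Real.ball_eq_Ioo] at hx
        exact ⟨hx.1.le, hx.2.le⟩
      · rw [Set.uIoc_of_le (by positivity)] at hs
        exact ⟨hs.1.le, hs.2⟩
    have hder := (intervalIntegral.hasDerivAt_integral_of_dominated_loc_of_deriv_le
      (F := Φ) (F' := W) (x₀ := t₀) (a := 0) (b := 2*Real.pi) (bound := fun _ => M)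
      (s := Metric.ball t₀ 1) (Metric.ball_mem_nhds t₀ one_pos)
      (Filter.Eventually.of_forall fun x =>
        (Phi_cont_s hu hD hDpos hγ x).aestronglyMeasurable)
      ((Phi_cont_s hu hD hDpos hγ t₀).intervalIntegrable _ _)
      ((hWcs t₀).aestronglyMeasurable)
      hbound
      intervalIntegrable_const
      (Filter.Eventually.of_forall fun s _ x _ =>
        Phi_hasDerivAt hb hu hD hDpos hcont heq hγ hflow x s)).2
    have hzero : (∫ s in (0:ℝ)..(2*Real.pi), W t₀ s) = 0 := by
      rw [intervalIntegral.integral_eq_sub_of_hasDerivAt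
        (f := fun σ => -g * (D (t₀, γ (t₀, σ)) - b (γ (t₀, σ))))
        (fun σ _ => Psi_hasDerivAt hb hD hγ t₀ σ) ((hWcs t₀).intervalIntegrable _ _)]
      have hp : γ (t₀, 2*Real.pi) = γ (t₀, 0) := by
        rw [show (2*Real.pi) = 0 + 2*Real.pi by ring]
        exact hper t₀ 0
      rw [hp]
      ring
    rwa [hzero] at hder
  have hconst := is_const_of_deriv_eq_zero
    (f := fun t => ∫ s in (0:ℝ)..(2*Real.pi), Φ t s)
    (fun t => (hC0 t).differentiableAt) (fun t => (hC0 t).deriv)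
  intro t₁ t₂
  have hInt : ∀ t : ℝ, (∫ s in (0 : ℝ)..(2 * Real.pi),
      (inner ℝ ((D (t, γ (t, s)))⁻¹ • mCH2 d u (t, γ (t, s))) (sdLoop γ t s) : ℝ))
      = ∫ s in (0:ℝ)..(2*Real.pi), Φ t s := by
    intro t
    refine intervalIntegral.integral_congr fun s _ => ?_
    simp [hPhidef, PiLp.inner_apply, RCLike.inner_apply, starRingEnd_apply,
      PiLp.smul_apply, smul_eq_mul, mul_assoc]
    ring
  rw [hInt t₁, hInt t₂]
  exact hconst t₁ t₂
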